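/- There exists no k-linear map Δ : D_A → D_A ⊗_A D_A satisfying μ*(D) = μ_*(Δ(D)) for all D ∈ D_A, where μ*(D)(a ⊗ b) = D(ab) and μ_*(D₁ ⊗_A D₂)(a ⊗ b) = D₁(a)·D₂(b). In particular D_A admits no bialgebroid structure with counit D ↦ D(1). -/
import Mathlib


open Polynomial

/-- The operator of multiplication by the polynomial `p`. -/
noncomputable def mulOp {k : Type*} [CommRing k] (p : k[X]) : Module.End k k[X] :=
  LinearMap.mulLeft k p

/-- The Weyl algebra `D_B`, realized as the subalgebra of `k`-linear endomorphisms of `k[t]`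
generated by multiplication by `t` and the derivative `∂`. -/
noncomputable def Weyl (k : Type*) [CommRing k] : Subalgebra k (Module.End k k[X]) :=
  Algebra.adjoin k {mulOp X, (derivative : k[X] →ₗ[k] k[X])}

/-- The left ideal `I·D_B` where `I = f·k[t]`: the `k`-span of operators `g·D`
with `g ∈ I` and `D ∈ D_B`. -/
noncomputable def IDB {k : Type*} [CommRing k] (f : k[X]) : Submodule k (Module.End k k[X]) :=
  Submodule.span k {E | ∃ g D, g ∈ Ideal.span {f} ∧ D ∈ Weyl k ∧ E = mulOp g * D}

/-- Membership in `D_A = k + I·D_B`. -/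
def memDA {k : Type*} [CommRing k] (f : k[X]) (E : Module.End k k[X]) : Prop :=
  ∃ c : k, E - algebraMap k (Module.End k k[X]) c ∈ IDB f

/-- Membership in `A = k + I` where `I = f·k[t]`. -/
def memA {k : Type*} [CommRing k] (f : k[X]) (p : k[X]) : Prop :=
  ∃ c : k, p - C c ∈ Ideal.span {f}

/-- `f` is a product of `r ≥ 2` pairwise coprime irreducible polynomials. -/
def NiceF {k : Type*} [CommRing k] (f : k[X]) : Prop :=
  ∃ (r : ℕ) (fs : Fin r → k[X]), 2 ≤ r ∧ (∀ i, Irreducible (fs i)) ∧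
    (∀ i j, i ≠ j → IsCoprime (fs i) (fs j)) ∧ f = ∏ i, fs i


lemma IDB_apply_mem {k : Type*} [CommRing k] (f : k[X]) {E : Module.End k k[X]}
    (hE : E ∈ IDB f) (p : k[X]) : E p ∈ Ideal.span {f} := by
  induction hE using Submodule.span_induction with
  | mem E hE =>
    obtain ⟨g, D, hg, _, rfl⟩ := hE
    simpa [mulOp, Module.End.mul_apply] using Ideal.mul_mem_right (D p) _ hg
  | zero => simp
  | add x y hx hy ihx ihy => simpa using Ideal.add_mem _ ihx ihy
  | smul c x hx ih =>
    simp only [LinearMap.smul_apply, Polynomial.smul_eq_C_mul]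
    exact Ideal.mul_mem_left _ _ ih

lemma memDA_apply {k : Type*} [CommRing k] (f : k[X]) {E : Module.End k k[X]}
    (hE : memDA f E) : E f ∈ Ideal.span {f} := by
  obtain ⟨c, hc⟩ := hE
  have h1 := IDB_apply_mem f hc f
  have h2 : (E - algebraMap k (Module.End k k[X]) c) f = E f - c • f := by
    simp [Module.algebraMap_end_apply]
  rw [h2] at h1
  have : E f = (E f - c • f) + c • f := by ring
  rw [this]
  exact Ideal.add_mem _ h1 (by
    rw [Polynomial.smul_eq_C_mul]
    exact Ideal.mul_mem_left _ _ (Ideal.mem_span_singleton_self f))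
/-- there is no assignment `Δ` (in particular no `k`-linear map
`Δ : D_A → D_A ⊗_A D_A`) such that `μ*(D) = μ_*(Δ(D))` for all `D ∈ D_A`, i.e. one cannot
write every `D ∈ D_A` as `D(ab) = Σᵢ D₁ᵢ(a)·D₂ᵢ(b)` on `A` with `D₁ᵢ, D₂ᵢ ∈ D_A`. -/
theorem stmt7 {k : Type*} [Field k] [CharZero k] (f : k[X]) (hf : NiceF f) :
    ¬ ∀ D : Module.End k k[X], memDA f D →
        ∃ (n : ℕ) (D₁ D₂ : Fin n → Module.End k k[X]),
          (∀ i, memDA f (D₁ i)) ∧ (∀ i, memDA f (D₂ i)) ∧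
          ∀ a b : k[X], memA f a → memA f b →
            D (a * b) = ∑ i, (D₁ i) a * (D₂ i) b := by
  obtain ⟨r, fs, hr, hirr, hcop, rfl⟩ := hf
  set f := ∏ i, fs i with hfdef
  intro H
  -- f is separable
  have hsep : f.Separable := separable_prod (fun i j hij => hcop i j hij)
      (fun i => (hirr i).separable)
  have hfne : f ≠ 0 := by
    apply Finset.prod_ne_zero_iff.mpr
    intro i _
    exact (hirr i).ne_zero
  have hfnu : ¬ IsUnit f := by
    intro hu
    have : Fin r := ⟨0, by omega⟩
    exact (hirr this).not_isUnit (isUnit_of_dvd_unit (Finset.dvd_prod_of_mem fs (Finset.mem_univ this)) hu)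
  -- our operator
  set d : Module.End k k[X] := (derivative : k[X] →ₗ[k] k[X]) with hd
  set D : Module.End k k[X] := mulOp f * (d * d) with hD
  have hDmem : memDA f D := by
    refine ⟨0, ?_⟩
    simp only [map_zero, sub_zero]
    exact Submodule.subset_span ⟨f, d * d, Ideal.mem_span_singleton_self f,
      mul_mem (Algebra.subset_adjoin (Or.inr rfl)) (Algebra.subset_adjoin (Or.inr rfl)), rfl⟩
  have hAf : memA f f := ⟨0, by simpa using Ideal.mem_span_singleton_self f⟩
  obtain ⟨n, D₁, D₂, h1, h2, heq⟩ := H D hDmem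
  have key := heq f f hAf hAf
  -- LHS computation
  have hLHS : D (f * f) = f * (derivative (derivative (f * f))) := by
    simp [hD, hd, mulOp, Module.End.mul_apply]
  -- RHS is in (f^2)
  have hRHS : (∑ i, (D₁ i) f * (D₂ i) f) ∈ Ideal.span {f * f} := by
    apply Ideal.sum_mem
    intro i _
    obtain ⟨p, hp⟩ := Ideal.mem_span_singleton.mp (memDA_apply f (h1 i))
    obtain ⟨q, hq⟩ := Ideal.mem_span_singleton.mp (memDA_apply f (h2 i))
    rw [hp, hq]
    exact Ideal.mem_span_singleton.mpr ⟨p * q, by ring⟩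
  rw [← key, hLHS] at hRHS
  have hdvd : f * f ∣ f * (derivative (derivative (f * f))) :=
    Ideal.mem_span_singleton.mp hRHS
  have hdvd2 : f ∣ derivative (derivative (f * f)) :=
    (mul_dvd_mul_iff_left hfne).mp hdvd
  have hder : derivative (derivative (f * f)) =
      derivative f * derivative f + derivative f * derivative f
        + (derivative (derivative f) * f + f * derivative (derivative f)) := by
    rw [derivative_mul, derivative_add, derivative_mul, derivative_mul]
    ring
  rw [hder] at hdvd2
  have hdvd3 : f ∣ derivative f * derivative f + derivative f * derivative f := by
    have : f ∣ derivative (derivative f) * f + f * derivative (derivative f) :=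
      dvd_add (dvd_mul_left f _) (dvd_mul_right f _)
    exact (dvd_add_right this).mp (by rwa [add_comm] at hdvd2)
  have hdvd4 : f ∣ derivative f * derivative f := by
    obtain ⟨c, hc⟩ := hdvd3
    refine ⟨C (2⁻¹ : k) * c, ?_⟩
    have h2ne : (2 : k) ≠ 0 := two_ne_zero
    have hC2 : (C (2 : k)) = (2 : k[X]) := by rw [show (2:k) = 1+1 from one_add_one_eq_two.symm, map_add, C_1, one_add_one_eq_two]
    have : (C (2 : k)) * (derivative f * derivative f) = f * c := by
      rw [hC2, two_mul, hc]
    calc derivative f * derivative f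
        = C (2⁻¹ : k) * (C (2 : k) * (derivative f * derivative f)) := by
          rw [← mul_assoc, ← C_mul, inv_mul_cancel₀ h2ne, C_1, one_mul]
      _ = C (2⁻¹ : k) * (f * c) := by rw [this]
      _ = f * (C (2⁻¹ : k) * c) := by ring
  exact hfnu ((hsep.mul_right hsep).isUnit_of_dvd' dvd_rfl hdvd4)
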